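/- Let a>0, b>0, c≥0, g0>0 and let f0, f1 be the MTTP vector fields on ℝ⁴. Let x = (x1,x2,x3,x4) ∈ ℝ⁴ be a point at which ((x4 − 2 c x1) cos x3 + c x2 sin x3, sin x3 (x4 − 3 c x1)) ≠ (0,0). Then the three vectors f1(x), [f0,f1](x) and ad³f0.f1(x) = [f0,[f0,[f0,f1]]](x) are linearly independent in ℝ⁴, i.e., the span of {f1(x), [f0,f1](x), ad³f0.f1(x)} has dimension 3. -/
import Mathlib

set_option maxHeartbeats 1000000

/-- The drift vector field of the MTTP system on ℝ⁴. -/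
noncomputable def mttpF0 (a c g0 : ℝ) : (Fin 4 → ℝ) → (Fin 4 → ℝ) :=
  fun x => ![a * Real.cos (x 2) - c * x 0 * x 1,
             a * Real.sin (x 2) + c * (x 0) ^ 2 - g0,
             x 3 - c * x 0,
             0]

/-- The control vector field of the MTTP system on ℝ⁴. -/
def mttpF1 (b : ℝ) : (Fin 4 → ℝ) → (Fin 4 → ℝ) :=
  fun _ => ![0, 0, 0, b]

/-- Lie bracket of vector fields on ℝ⁴: [f,g](x) = Dg(x)·f(x) − Df(x)·g(x). -/
noncomputable def lieBracket4 (f g : (Fin 4 → ℝ) → (Fin 4 → ℝ)) :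
    (Fin 4 → ℝ) → (Fin 4 → ℝ) :=
  fun x => fderiv ℝ g x (f x) - fderiv ℝ f x (g x)

private noncomputable def pj (i : Fin 4) : (Fin 4 → ℝ) →L[ℝ] ℝ := ContinuousLinearMap.proj i

lemma fderiv_mttpF0_apply (a c g0 : ℝ) (x v : Fin 4 → ℝ) :
    fderiv ℝ (mttpF0 a c g0) x v =
      ![-(a * Real.sin (x 2)) * v 2 - c * x 1 * v 0 - c * x 0 * v 1,
        a * Real.cos (x 2) * v 2 + 2 * c * x 0 * v 0,
        v 3 - c * v 0,
        0] := by
  have h0 : HasFDerivAt (fun y : Fin 4 → ℝ => a * Real.cos (y 2) - c * y 0 * y 1)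
      (a • ((-Real.sin (x 2)) • pj 2) - ((c * x 0) • pj 1 + x 1 • (c • pj 0))) x :=
    ((hasFDerivAt_apply 2 x).cos.const_mul a).sub
      (((hasFDerivAt_apply 0 x).const_mul c).mul (hasFDerivAt_apply 1 x))
  have h1 : HasFDerivAt (fun y : Fin 4 → ℝ => a * Real.sin (y 2) + c * (y 0) ^ 2 - g0)
      ((a • (Real.cos (x 2) • pj 2) + c • (x 0 • pj 0 + x 0 • pj 0))) x := by
    simp only [pow_two]
    exact (((hasFDerivAt_apply 2 x).sin.const_mul a).add
      (((hasFDerivAt_apply 0 x).mul (hasFDerivAt_apply 0 x)).const_mul c)).sub_const g0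
  have h2 : HasFDerivAt (fun y : Fin 4 → ℝ => y 3 - c * y 0)
      (pj 3 - c • pj 0) x :=
    (hasFDerivAt_apply 3 x).sub ((hasFDerivAt_apply 0 x).const_mul c)
  have h3 : HasFDerivAt (𝕜 := ℝ) (fun _ : Fin 4 → ℝ => (0 : ℝ)) 0 x := by
    exact hasFDerivAt_const 0 x
  have h : HasFDerivAt (mttpF0 a c g0)
      (ContinuousLinearMap.pi ![(a • ((-Real.sin (x 2)) • pj 2) -
          ((c * x 0) • pj 1 + x 1 • (c • pj 0))),
        (a • (Real.cos (x 2) • pj 2) + c • (x 0 • pj 0 + x 0 • pj 0)),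
        (pj 3 - c • pj 0), 0]) x := by
    rw [hasFDerivAt_pi']
    intro i
    fin_cases i <;>
      simp only [mttpF0, ContinuousLinearMap.proj_pi, pj, Matrix.cons_val_zero,
        Matrix.cons_val_one, Matrix.head_cons, Matrix.cons_val_two, Matrix.tail_cons,
        Matrix.cons_val_three, Fin.isValue, Matrix.cons_val', Matrix.empty_val',
        Matrix.cons_val_fin_one] <;>
      [exact h0; exact h1; exact h2; exact h3]
  rw [h.fderiv]
  funext i
  fin_cases i <;>
    simp [ContinuousLinearMap.pi_apply, ContinuousLinearMap.sub_apply,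
      ContinuousLinearMap.add_apply, ContinuousLinearMap.smul_apply,
      ContinuousLinearMap.proj_apply, pj, smul_eq_mul] <;> ring

lemma bracket1_eq (a b c g0 : ℝ) :
    lieBracket4 (mttpF0 a c g0) (mttpF1 b) = fun _ => ![0, 0, -b, 0] := by
  funext y
  have hconst : fderiv ℝ (mttpF1 b) y = 0 := fderiv_const_apply _
  simp only [lieBracket4, hconst, ContinuousLinearMap.zero_apply]
  rw [show mttpF1 b y = ![0,0,0,b] from rfl, fderiv_mttpF0_apply]
  funext i
  fin_cases i <;> simp

lemma bracket2_eq (a b c g0 : ℝ) :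
    lieBracket4 (mttpF0 a c g0) (lieBracket4 (mttpF0 a c g0) (mttpF1 b)) =
      fun y => ![-(a * b * Real.sin (y 2)), a * b * Real.cos (y 2), 0, 0] := by
  rw [bracket1_eq]
  funext y
  have hconst : fderiv ℝ (fun _ : Fin 4 → ℝ => (![0, 0, -b, 0] : Fin 4 → ℝ)) y = 0 :=
    fderiv_const_apply _
  simp only [lieBracket4, hconst, ContinuousLinearMap.zero_apply, fderiv_mttpF0_apply]
  funext i
  fin_cases i <;> simp <;> ring

lemma fderivG2_apply (a b : ℝ) (x v : Fin 4 → ℝ) :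
    fderiv ℝ (fun y : Fin 4 → ℝ =>
        (![-(a * b * Real.sin (y 2)), a * b * Real.cos (y 2), 0, 0] : Fin 4 → ℝ)) x v =
      ![-(a * b * Real.cos (x 2)) * v 2, -(a * b * Real.sin (x 2)) * v 2, 0, 0] := by
  have h0 : HasFDerivAt (fun y : Fin 4 → ℝ => -(a * b * Real.sin (y 2)))
      (-((a * b) • (Real.cos (x 2) • pj 2))) x :=
    ((hasFDerivAt_apply 2 x).sin.const_mul (a * b)).neg
  have h1 : HasFDerivAt (fun y : Fin 4 → ℝ => a * b * Real.cos (y 2))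
      ((a * b) • ((-Real.sin (x 2)) • pj 2)) x :=
    (hasFDerivAt_apply 2 x).cos.const_mul (a * b)
  have h3 : HasFDerivAt (𝕜 := ℝ) (fun _ : Fin 4 → ℝ => (0 : ℝ)) 0 x := by
    exact hasFDerivAt_const 0 x
  have h : HasFDerivAt (fun y : Fin 4 → ℝ =>
        (![-(a * b * Real.sin (y 2)), a * b * Real.cos (y 2), 0, 0] : Fin 4 → ℝ))
      (ContinuousLinearMap.pi ![(-((a * b) • (Real.cos (x 2) • pj 2))),
        ((a * b) • ((-Real.sin (x 2)) • pj 2)), 0, 0]) x := by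
    rw [hasFDerivAt_pi']
    intro i
    fin_cases i <;>
      simp only [ContinuousLinearMap.proj_pi, pj, Matrix.cons_val_zero,
        Matrix.cons_val_one, Matrix.head_cons, Matrix.cons_val_two, Matrix.tail_cons,
        Matrix.cons_val_three, Fin.isValue, Matrix.cons_val', Matrix.empty_val',
        Matrix.cons_val_fin_one] <;>
      [exact h0; exact h1; exact h3; exact h3]
  rw [h.fderiv]
  funext i
  fin_cases i <;>
    simp [ContinuousLinearMap.pi_apply, ContinuousLinearMap.sub_apply,
      ContinuousLinearMap.neg_apply, ContinuousLinearMap.smul_apply,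
      ContinuousLinearMap.proj_apply, pj, smul_eq_mul] <;> ring

lemma bracket3_eq (a b c g0 : ℝ) (x : Fin 4 → ℝ) :
    lieBracket4 (mttpF0 a c g0)
        (lieBracket4 (mttpF0 a c g0) (lieBracket4 (mttpF0 a c g0) (mttpF1 b))) x =
      ![-(a * b) * ((x 3 - 2 * c * x 0) * Real.cos (x 2) + c * x 1 * Real.sin (x 2)),
        -(a * b) * (Real.sin (x 2) * (x 3 - 3 * c * x 0)),
        -(a * b * c * Real.sin (x 2)), 0] := by
  rw [bracket2_eq]
  simp only [lieBracket4, fderivG2_apply, fderiv_mttpF0_apply]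
  funext i
  fin_cases i <;>
    simp [mttpF0, Real.sin_sq, smul_eq_mul] <;> ring

theorem stmt6 (a b c g0 : ℝ) (ha : 0 < a) (hb : 0 < b) (hc : 0 ≤ c) (hg0 : 0 < g0)
    (x : Fin 4 → ℝ)
    (hx : ((x 3 - 2 * c * x 0) * Real.cos (x 2) + c * x 1 * Real.sin (x 2),
           Real.sin (x 2) * (x 3 - 3 * c * x 0)) ≠ (0, 0)) :
    LinearIndependent ℝ
      ![mttpF1 b x,
        lieBracket4 (mttpF0 a c g0) (mttpF1 b) x,
        lieBracket4 (mttpF0 a c g0)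
          (lieBracket4 (mttpF0 a c g0) (lieBracket4 (mttpF0 a c g0) (mttpF1 b))) x] ∧
    Module.finrank ℝ
      (Submodule.span ℝ
        ({mttpF1 b x,
          lieBracket4 (mttpF0 a c g0) (mttpF1 b) x,
          lieBracket4 (mttpF0 a c g0)
            (lieBracket4 (mttpF0 a c g0) (lieBracket4 (mttpF0 a c g0) (mttpF1 b))) x} :
          Set (Fin 4 → ℝ))) = 3 := by
  set P := (x 3 - 2 * c * x 0) * Real.cos (x 2) + c * x 1 * Real.sin (x 2) with hP
  set Q := Real.sin (x 2) * (x 3 - 3 * c * x 0) with hQ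
  have hPQ : P ≠ 0 ∨ Q ≠ 0 := by
    by_contra h
    push_neg at h
    exact hx (by rw [h.1, h.2])
  have hab : a * b ≠ 0 := by positivity
  have hv1 : mttpF1 b x = ![0, 0, 0, b] := rfl
  have hv2 : lieBracket4 (mttpF0 a c g0) (mttpF1 b) x = ![0, 0, -b, 0] := by
    rw [bracket1_eq]
  have hv3 : lieBracket4 (mttpF0 a c g0)
      (lieBracket4 (mttpF0 a c g0) (lieBracket4 (mttpF0 a c g0) (mttpF1 b))) x =
      ![-(a * b) * P, -(a * b) * Q, -(a * b * c * Real.sin (x 2)), 0] :=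
    bracket3_eq a b c g0 x
  have hli : LinearIndependent ℝ
      ![mttpF1 b x,
        lieBracket4 (mttpF0 a c g0) (mttpF1 b) x,
        lieBracket4 (mttpF0 a c g0)
          (lieBracket4 (mttpF0 a c g0) (lieBracket4 (mttpF0 a c g0) (mttpF1 b))) x] := by
    rw [hv1, hv2, hv3]
    rw [Fintype.linearIndependent_iff]
    intro g hg
    rw [Fin.sum_univ_three] at hg
    simp only [Matrix.cons_val_zero, Matrix.cons_val_one, Matrix.head_cons,
      Matrix.cons_val_two, Matrix.tail_cons] at hg
    have e0 := congrFun hg 0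
    have e1 := congrFun hg 1
    have e2 := congrFun hg 2
    have e3 := congrFun hg 3
    simp [Pi.add_apply, Pi.smul_apply, smul_eq_mul] at e0 e1 e2 e3
    have hg0 : g 0 = 0 := e3.resolve_right hb.ne'
    have hg2 : g 2 = 0 := by
      rcases hPQ with hP0 | hQ0
      · rcases e0 with h | (h | h) | h
        · exact h
        · exact absurd h ha.ne'
        · exact absurd h hb.ne'
        · exact absurd h hP0
      · rcases e1 with h | (h | h) | h
        · exact h
        · exact absurd h ha.ne'
        · exact absurd h hb.ne'
        · exact absurd h hQ0
    have hg1 : g 1 = 0 := by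
      have hb' : g 1 * b = 0 := by
        rw [hg2] at e2; simpa using e2
      exact (mul_eq_zero.1 hb').resolve_right hb.ne'
    intro i
    fin_cases i <;> assumption
  refine ⟨hli, ?_⟩
  have hset : ({mttpF1 b x,
          lieBracket4 (mttpF0 a c g0) (mttpF1 b) x,
          lieBracket4 (mttpF0 a c g0)
            (lieBracket4 (mttpF0 a c g0) (lieBracket4 (mttpF0 a c g0) (mttpF1 b))) x} :
          Set (Fin 4 → ℝ)) = Set.range
      ![mttpF1 b x,
        lieBracket4 (mttpF0 a c g0) (mttpF1 b) x,
        lieBracket4 (mttpF0 a c g0)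
          (lieBracket4 (mttpF0 a c g0) (lieBracket4 (mttpF0 a c g0) (mttpF1 b))) x] := by
    ext z
    simp [Matrix.range_cons, Matrix.range_empty]
    tauto
  rw [hset, finrank_span_eq_card hli]
  simp
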